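/- arXiv:1001.2929 — 3 statements merged into one kernel-verified Lean document; each statement's English description precedes it below -/
import Mathlib

section
/- Let V be a finite-dimensional vector space over a field K of characteristic 0, let u be an endomorphism of V, and let r ≥ 1 be an integer. If u is invertible and u^r is semisimple, then u is semisimple. -/
/-- Let `V` be a finite-dimensional vector space over a field `K` of characteristic 0,
`u` an endomorphism of `V`, and `r ≥ 1`. If `u` is invertible and `u ^ r` is semisimple,
then `u` is semisimple. -/
theorem stmt_0 {K V : Type*} [Field K] [CharZero K] [AddCommGroup V] [Module K V]
    [FiniteDimensional K V] (u : Module.End K V) (r : ℕ) (hr : 1 ≤ r)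
    (hu : IsUnit u) (hss : (u ^ r).IsSemisimple) : u.IsSemisimple := by
  classical
  set m : Polynomial K := minpoly K (u ^ r) with hm_def
  have hm : Squarefree m := hss.minpoly_squarefree
  have hur : IsUnit (u ^ r) := hu.pow r
  have hint : IsIntegral K (u ^ r) := Algebra.IsIntegral.isIntegral _
  -- constant coefficient of m is nonzero
  have hXm : ¬ (Polynomial.X ∣ m) := by
    intro ⟨q, hq⟩
    have hq0 : Polynomial.aeval (u ^ r) q = 0 := by
      have := minpoly.aeval K (u ^ r)
      rw [← hm_def, hq, map_mul, Polynomial.aeval_X] at this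
      exact (IsUnit.mul_right_eq_zero hur).mp this
    have hqne : q ≠ 0 := by
      rintro rfl
      exact (minpoly.ne_zero hint) (by simpa using hq)
    have hdvd : m ∣ q := minpoly.dvd K (u ^ r) hq0
    have := Polynomial.natDegree_le_of_dvd hdvd hqne
    rw [hq, Polynomial.natDegree_mul Polynomial.X_ne_zero hqne, Polynomial.natDegree_X] at this
    omega
  have hm0 : m.coeff 0 ≠ 0 := fun h => hXm (Polynomial.X_dvd_iff.mpr h)
  -- the candidate annihilating polynomial
  set p : Polynomial K := Polynomial.expand K r m with hp_def
  have hpu : Polynomial.aeval u p = 0 := by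
    rw [hp_def, Polynomial.expand_aeval]
    exact minpoly.aeval K _
  -- m is separable
  have hmsep : m.Separable := (PerfectField.separable_iff_squarefree).mpr hm
  -- p is coprime with X
  have hpX : IsCoprime p (Polynomial.X : Polynomial K) := by
    rw [isCoprime_comm]
    refine (Polynomial.irreducible_X.coprime_iff_not_dvd).mpr ?_
    rw [Polynomial.X_dvd_iff, hp_def, Polynomial.coeff_expand hr]
    simpa using hm0
  -- p is separable
  have hpsep : p.Separable := by
    rw [Polynomial.Separable, hp_def, Polynomial.derivative_expand]
    have hrunit : IsUnit ((r : Polynomial K)) := by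
      rw [← Polynomial.C_eq_natCast]
      exact Polynomial.isUnit_C.mpr
        (isUnit_iff_ne_zero.mpr (by exact_mod_cast Nat.one_le_iff_ne_zero.mp hr))
    refine IsCoprime.mul_right ?_ ?_
    · exact IsCoprime.map hmsep (Polynomial.expand K r).toRingHom
    · exact (isCoprime_mul_unit_left_right hrunit _ _).mpr hpX.pow_right
  exact Module.End.isSemisimple_of_squarefree_aeval_eq_zero hpsep.squarefree hpu
end

section
/- Let k be a perfect field of characteristic p > 0, V a finite-dimensional k-vector space, φ a σ-semilinear endomorphism of V (σ the Frobenius of k), and let k̄ be an algebraic closure of k. Then the stable rank of φ on V equals the stable rank of φ ⊗ σ̄ on V ⊗_k k̄. -/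
/-!
Since the field is perfect, the image of a subspace under a Frobenius-semilinear map is again a
subspace, so the images `φ^i(V)` form a decreasing chain of subspaces; by finite dimensionality it
stabilises, and the stable part is `φ^N(V)` for all large `N`. Base change commutes with taking
images, `ψ(k̄ ⊗ W) = k̄ ⊗ φ(W)`, hence `ψ^N(k̄ ⊗ V) = k̄ ⊗ φ^N(V)`, and base change preserves
dimension.
-/

open TensorProduct

def frobeniusSemilinearMap {K M : Type*} [Field K] (p : ℕ) [ExpChar K p] [PerfectRing K p]
    [AddCommGroup M] [Module K M] (f : M → M) (hadd : ∀ x y, f (x + y) = f x + f y)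
    (hsmul : ∀ (c : K) x, f (c • x) = c ^ p • f x) :
    M →ₛₗ[(frobeniusEquiv K p : K →+* K)] M where
  toFun := f
  map_add' := hadd
  map_smul' := hsmul

namespace Submodule

section Iterate

variable {R M : Type*} [Ring R] [AddCommGroup M] [Module R M] {σ : R →+* R}
  [RingHomSurjective σ] (f : M →ₛₗ[σ] M)

theorem coe_iterate_map_top (i : ℕ) : ((map f)^[i] ⊤ : Submodule R M) = Set.range (f^[i]) := by
  induction i with
  | zero => simp
  | succ i ih =>
    rw [Function.iterate_succ_apply', map_coe, ih, ← Set.range_comp, ← Function.iterate_succ']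

theorem antitone_iterate_map_top : Antitone fun i => (map f)^[i] ⊤ :=
  Monotone.antitone_iterate_of_map_le (fun _ _ => map_mono) le_top

theorem exists_iInter_range_iterate_eq [IsArtinian R M] :
    ∃ N, ∀ n ≥ N, ⋂ i, Set.range (f^[i]) = ((map f)^[n] ⊤ : Submodule R M) := by
  obtain ⟨N, hN⟩ := IsArtinian.monotone_stabilizes
    ⟨fun i => OrderDual.toDual ((map f)^[i] ⊤), antitone_iterate_map_top f⟩
  have hstab : ∀ m ≥ N, (map f)^[m] ⊤ = (map f)^[N] ⊤ := fun m hm => (hN m hm).symm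
  refine ⟨N, fun n hn => ?_⟩
  simp only [← coe_iterate_map_top]
  refine (Set.iInter_subset _ n).antisymm (Set.subset_iInter fun i => ?_)
  rcases le_total i N with hi | hi
  · exact antitone_iterate_map_top f (hi.trans hn)
  · rw [hstab i hi, hstab n hn]

end Iterate

section BaseChange

variable {R A M : Type*} [CommRing R] [CommRing A] [Algebra R A] [AddCommGroup M] [Module R M]
  {σ : R →+* R} {τ : A →+* A} [RingHomSurjective σ] [RingHomSurjective τ]
  {f : M →ₛₗ[σ] M} {g : A ⊗[R] M →ₛₗ[τ] A ⊗[R] M}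

theorem baseChange_map_eq_map_baseChange (hgf : ∀ v, g (1 ⊗ₜ v) = 1 ⊗ₜ f v)
    (W : Submodule R M) : (map f W).baseChange A = map g (W.baseChange A) := by
  rw [baseChange_eq_span, baseChange_eq_span, map_span, map_coe, map_coe, map_coe,
    Set.image_image, Set.image_image]
  simp only [mk_apply, hgf]

theorem baseChange_iterate_map_top (hgf : ∀ v, g (1 ⊗ₜ v) = 1 ⊗ₜ f v) (i : ℕ) :
    ((map f)^[i] ⊤).baseChange A = (map g)^[i] ⊤ := by
  rw [← baseChange_top A (M := M)]
  exact (Function.Semiconj.iterate_right (baseChange_map_eq_map_baseChange hgf) i) ⊤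

end BaseChange

theorem finrank_baseChange {k V : Type*} (K : Type*) [Field k] [Field K] [Algebra k K]
    [AddCommGroup V] [Module k V] (W : Submodule k V) :
    Module.finrank K (W.baseChange K) = Module.finrank k W := by
  have hinj : Function.Injective (W.subtype.baseChange K) := by
    rw [LinearMap.baseChange_eq_ltensor]
    exact Module.Flat.lTensor_preserves_injective_linearMap _ W.injective_subtype
  rw [baseChange, LinearMap.finrank_range_of_inj hinj, Module.finrank_baseChange]

end Submodule

/-- The stable rank of a Frobenius-semilinear endomorphism `φ` of a finite-dimensional
vector space `V` over a perfect field `k` of characteristic `p > 0` equals the stable rank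
of its semilinear extension `ψ = φ ⊗ σ̄` to `V ⊗_k k̄`, `k̄` an algebraic closure of `k`.
The stable rank is the dimension of `⋂_{i ≥ 0} φ^i(V)`. -/
theorem stmt_2 {k V : Type*} [Field k] (p : ℕ) [Fact p.Prime] [CharP k p] [PerfectRing k p]
    [AddCommGroup V] [Module k V] [FiniteDimensional k V]
    (φ : V → V) (hadd : ∀ x y : V, φ (x + y) = φ x + φ y)
    (hsmul : ∀ (c : k) (x : V), φ (c • x) = c ^ p • φ x)
    (ψ : AlgebraicClosure k ⊗[k] V → AlgebraicClosure k ⊗[k] V)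
    (hψadd : ∀ x y, ψ (x + y) = ψ x + ψ y)
    (hψsmul : ∀ (c : AlgebraicClosure k) x, ψ (c • x) = c ^ p • ψ x)
    (hcompat : ∀ (a : AlgebraicClosure k) (v : V), ψ (a ⊗ₜ[k] v) = (a ^ p) ⊗ₜ[k] φ v)
    (S : Submodule k V) (T : Submodule (AlgebraicClosure k) (AlgebraicClosure k ⊗[k] V))
    (hS : (S : Set V) = ⋂ i : ℕ, Set.range (φ^[i]))
    (hT : (T : Set (AlgebraicClosure k ⊗[k] V)) = ⋂ i : ℕ, Set.range (ψ^[i])) :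
    Module.finrank k S = Module.finrank (AlgebraicClosure k) T := by
  set f := frobeniusSemilinearMap p φ hadd hsmul
  set g := frobeniusSemilinearMap p ψ hψadd hψsmul
  have hgf : ∀ v, g (1 ⊗ₜ v) = 1 ⊗ₜ f v := fun v => (hcompat 1 v).trans (by rw [one_pow]; rfl)
  obtain ⟨N₁, hN₁⟩ := Submodule.exists_iInter_range_iterate_eq f
  obtain ⟨N₂, hN₂⟩ := Submodule.exists_iInter_range_iterate_eq g
  set N := max N₁ N₂
  have hSN : S = (Submodule.map f)^[N] ⊤ :=
    SetLike.coe_injective (hS.trans (hN₁ N (le_max_left _ _)))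
  have hTN : T = ((Submodule.map f)^[N] ⊤).baseChange _ := by
    rw [Submodule.baseChange_iterate_map_top hgf]
    exact SetLike.coe_injective (hT.trans (hN₂ N (le_max_right _ _)))
  rw [hSN, hTN, Submodule.finrank_baseChange]
end

section
/- Let K be a field and V a finite-dimensional K-vector space of even dimension 2m, equipped with an alternating bilinear form Ω. If Ω is nondegenerate, then the m-th wedge power Ω^{∧m} ∈ Λ^{2m}(V^*) is nonzero; conversely if Ω^{∧m} ≠ 0 then Ω is nondegenerate. -/
set_option synthInstance.maxHeartbeats 400000

open TensorProduct

/-- The element of the exterior algebra of the dual space associated to a bilinear form `B`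
on a finite-dimensional space: writing `B = ∑ fᵢ ⊗ gᵢ ∈ V* ⊗ V*`, it is `∑ fᵢ ∧ gᵢ`. -/
noncomputable def bilinToExterior {K V : Type*} [Field K] [AddCommGroup V] [Module K V]
    [FiniteDimensional K V] (B : LinearMap.BilinForm K V) :
    ExteriorAlgebra K (Module.Dual K V) :=
  TensorProduct.lift
    ((LinearMap.mul K (ExteriorAlgebra K (Module.Dual K V))).compl₁₂
      (ExteriorAlgebra.ι K) (ExteriorAlgebra.ι K))
    ((dualTensorHomEquiv K V (Module.Dual K V)).symm B)

/-!
Every alternating form splits as `Ω = ∑_{j<k} a_j ∧ b_j` with `a_0, b_0, …, a_{k-1}, b_{k-1}`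
linearly independent in `V^*`: pick `e, f` with `Ω e f = 1`, subtract `Ω e ∧ Ω f`, which kills
`span {e, f}`, and recurse on a complement. Since `Ω x = ∑_j (a_j x) b_j - (b_j x) a_j`, such an
`Ω` is nondegenerate exactly when `2k = dim V`. In `Λ(V^*)` the form becomes `2 ∑_j a_j ∧ b_j`,
a sum of commuting elements of square zero, so its `n`-th power vanishes for `n > k` while its
`k`-th power is `2^k k! a_0 ∧ b_0 ∧ ⋯ ∧ a_{k-1} ∧ b_{k-1} ≠ 0`.
-/

section SquareZero

variable {A : Type*} [Semiring A]

theorem Commute.add_pow_succ_of_mul_self_eq_zero {a b : A} (h : Commute a b) (ha : a * a = 0)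
    (n : ℕ) : (a + b) ^ (n + 1) = b ^ (n + 1) + (n + 1) • (a * b ^ n) := by
  induction n with
  | zero => simp [add_comm]
  | succ n ih =>
    have hab : b * (a * b ^ n) = a * b ^ (n + 1) := by
      rw [← mul_assoc, ← h.eq, mul_assoc, pow_succ']
    rw [pow_succ', ih, add_mul, mul_add, mul_add, mul_smul_comm, mul_smul_comm, ← mul_assoc a a,
      ha, zero_mul, smul_zero, add_zero, hab, ← pow_succ', succ_nsmul _ (n + 1)]
    abel

variable {k : ℕ} {x : Fin k → A}

theorem sum_pow_succ_eq_zero_of_mul_self_eq_zero (hcomm : ∀ i j, Commute (x i) (x j))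
    (hsq : ∀ i, x i * x i = 0) : (∑ i, x i) ^ (k + 1) = 0 := by
  induction k with
  | zero => simp
  | succ k ih =>
    have ih' := ih (x := fun i => x i.succ) (fun i j => hcomm _ _) (fun i => hsq _)
    rw [Fin.sum_univ_succ, (Commute.sum_right _ _ _ fun i _ => hcomm 0 i.succ)
      |>.add_pow_succ_of_mul_self_eq_zero (hsq 0), pow_succ, ih', zero_mul, mul_zero, smul_zero,
      add_zero]

theorem sum_pow_eq_factorial_nsmul_prod_of_mul_self_eq_zero
    (hcomm : ∀ i j, Commute (x i) (x j)) (hsq : ∀ i, x i * x i = 0) :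
    (∑ i, x i) ^ k = k.factorial • (List.ofFn x).prod := by
  induction k with
  | zero => simp
  | succ k ih =>
    rw [Fin.sum_univ_succ, (Commute.sum_right _ _ _ fun i _ => hcomm 0 i.succ)
      |>.add_pow_succ_of_mul_self_eq_zero (hsq 0),
      sum_pow_succ_eq_zero_of_mul_self_eq_zero (fun i j => hcomm _ _) (fun i => hsq _),
      ih (fun i j => hcomm _ _) (fun i => hsq _), List.ofFn_succ, List.prod_cons, mul_smul_comm,
      smul_smul, zero_add, Nat.factorial_succ]

end SquareZero

namespace ExteriorAlgebra

section CommRing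

variable {R M : Type*} [CommRing R] [AddCommGroup M] [Module R M]

theorem ι_mul_ι_comm (x y : M) : ι R x * ι R y = -(ι R y * ι R x) :=
  eq_neg_of_add_eq_zero_left (ι_add_mul_swap x y)

theorem commute_ι_ι_mul_ι (z x y : M) : Commute (ι R z) (ι R x * ι R y) := by
  rw [Commute, SemiconjBy, ← mul_assoc, ι_mul_ι_comm z x, neg_mul, mul_assoc, ι_mul_ι_comm z y,
    mul_neg, neg_neg, mul_assoc]

theorem commute_ι_mul_ι (a b x y : M) : Commute (ι R a * ι R b) (ι R x * ι R y) :=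
  (commute_ι_ι_mul_ι a x y).mul_left (commute_ι_ι_mul_ι b x y)

theorem ι_mul_ι_mul_self (a b : M) : ι R a * ι R b * (ι R a * ι R b) = 0 := by
  rw [mul_assoc, ← mul_assoc (ι R b), ι_mul_ι_comm b a, neg_mul, mul_assoc, ι_sq_zero, mul_zero,
    neg_zero, mul_zero]

end CommRing

variable {K E : Type*} [Field K] [AddCommGroup E] [Module K E]

theorem ιMulti_ne_zero_of_linearIndependent {n : ℕ} {v : Fin n → E}
    (hv : LinearIndependent K v) : ιMulti K n v ≠ 0 := by
  have h := (exteriorPower.ιMulti_family_linearIndependent_field (n := n) hv).ne_zero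
    (Set.powersetCard.ofFinEmbEquiv (OrderIso.refl (Fin n)).toOrderEmbedding)
  rwa [Ne, ← Submodule.coe_eq_zero, exteriorPower.ιMulti_family_apply_coe, ιMulti_family,
    Equiv.symm_apply_apply] at h

theorem prod_ofFn_ι_mul_ι_ne_zero {k : ℕ} {u : Fin k → Fin 2 → E}
    (hu : LinearIndependent K (Function.uncurry u)) :
    (List.ofFn fun j => ι K (u j 0) * ι K (u j 1)).prod ≠ 0 := by
  have h := ιMulti_ne_zero_of_linearIndependent (hu.comp _ finProdFinEquiv.symm.injective)
  have hpair (j : Fin k) (i : Fin 2) (h) :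
      finProdFinEquiv.symm (⟨j * 2 + i, h⟩ : Fin (k * 2)) = (j, i) :=
    finProdFinEquiv.symm_apply_eq.mpr (Fin.ext (by simp [mul_comm, add_comm]))
  rw [ιMulti_apply, List.ofFn_mul, List.prod_flatten] at h
  simpa [List.map_ofFn, Function.comp_def, hpair] using h

end ExteriorAlgebra

open Module ExteriorAlgebra

namespace LinearMap.BilinForm

variable {R M : Type*} [CommRing R] [AddCommGroup M] [Module R M]

def wedge (f g : Dual R M) : LinearMap.BilinForm R M :=
  f.smulRight g - g.smulRight f

theorem wedge_apply (f g : Dual R M) (x : M) : wedge f g x = f x • g - g x • f := rfl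

@[simp]
theorem wedge_apply_apply (f g : Dual R M) (x y : M) :
    wedge f g x y = f x * g y - g x * f y := rfl

theorem IsRefl.apply_projection {Ψ : LinearMap.BilinForm R M} (hΨ : Ψ.IsRefl)
    {O W : Submodule R M} (h : IsCompl O W) (hW : ∀ w ∈ W, Ψ w = 0) (x y : M) :
    Ψ (O.projection W h x) (O.projection W h y) = Ψ x y := by
  have hsub (z : M) : z - O.projection W h z ∈ W := by
    rw [← Submodule.projection_apply_eq_zero_iff h, map_sub,
      Submodule.projection_apply_of_mem_left h (Submodule.projection_apply_mem h z), sub_self]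
  have hx : Ψ (x - O.projection W h x) y = 0 := by rw [hW _ (hsub x), LinearMap.zero_apply]
  have hy : Ψ (O.projection W h x) (y - O.projection W h y) = 0 :=
    hΨ _ _ (by rw [hW _ (hsub y), LinearMap.zero_apply])
  rw [map_sub, sub_eq_zero] at hy
  rw [map_sub, LinearMap.sub_apply, sub_eq_zero] at hx
  rw [hx, hy]

end LinearMap.BilinForm

open LinearMap.BilinForm

section Wedge

variable {K V : Type*} [Field K] [AddCommGroup V] [Module K V] {k : ℕ}

theorem LinearIndependent.two_mul_le_finrank [FiniteDimensional K V]
    {u : Fin k → Fin 2 → Dual K V} (hu : LinearIndependent K (Function.uncurry u)) :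
    2 * k ≤ finrank K V := by
  simpa [Subspace.dual_finrank_eq, mul_comm] using hu.fintype_card_le_finrank

theorem LinearIndependent.uncurry_fin_cons {u : Fin k → Fin 2 → Dual K V}
    (hu : LinearIndependent K (Function.uncurry u)) {α β : Dual K V} {e f : V}
    (hue : ∀ j i, u j i e = 0) (huf : ∀ j i, u j i f = 0)
    (hαe : α e = 0) (hαf : α f ≠ 0) (hβe : β e ≠ 0) :
    LinearIndependent K (Function.uncurry (Fin.cons ![α, β] u : Fin (k + 1) → Fin 2 → _)) := by
  rw [Fintype.linearIndependent_iff] at hu ⊢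
  intro c hc
  simp only [Fintype.sum_prod_type, Fin.sum_univ_succ, Function.uncurry_apply_pair,
    Fin.cons_zero, Fin.cons_succ, Matrix.cons_val_zero] at hc
  have hβ : c (0, 1) = 0 := by simpa [hαe, hue, hβe] using congr($hc e)
  have hα : c (0, 0) = 0 := by simpa [hβ, huf, hαf] using congr($hc f)
  have htail := hu (fun p => c (p.1.succ, p.2)) (by
    simpa [Fintype.sum_prod_type, Fin.sum_univ_two, hα, hβ] using hc)
  rintro ⟨j, i⟩
  induction j using Fin.cases with
  | zero => fin_cases i <;> assumption
  | succ j => exact htail (j, i)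

theorem LinearMap.BilinForm.IsAlt.exists_eq_sum_wedge [FiniteDimensional K V]
    {Ω : LinearMap.BilinForm K V} (hΩ : Ω.IsAlt) :
    ∃ (k : ℕ) (u : Fin k → Fin 2 → Dual K V),
      LinearIndependent K (Function.uncurry u) ∧ Ω = ∑ j, wedge (u j 0) (u j 1) := by
  induction hn : finrank K V using Nat.strong_induction_on generalizing V with
  | _ n ih =>
  by_cases hΩ0 : Ω = 0
  · exact ⟨0, Fin.elim0, linearIndependent_empty_type, by simp [hΩ0]⟩
  obtain ⟨e, f, hef⟩ : ∃ e f, Ω e f = 1 := by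
    obtain ⟨e, f, hf⟩ : ∃ e f, Ω e f ≠ 0 := by
      by_contra! h
      exact hΩ0 (LinearMap.ext₂ h)
    exact ⟨e, (Ω e f)⁻¹ • f, by simp [hf]⟩
  have hfe : Ω f e = -1 := by rw [← LinearMap.IsAlt.neg hΩ e f, hef]
  set W := Submodule.span K {e, f}
  have heW : e ∈ W := Submodule.subset_span (by simp)
  have hfW : f ∈ W := Submodule.subset_span (by simp)
  obtain ⟨O, hWO⟩ := W.exists_isCompl
  set π := O.projectionOnto W hWO.symm
  set Ψ := Ω - wedge (Ω e) (Ω f)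
  have hΨ : Ψ.IsAlt := fun x => by simp [Ψ, hΩ.self_eq_zero, mul_comm]
  have hΨW : ∀ w ∈ W, Ψ w = 0 := by
    intro w hw
    obtain ⟨a, b, rfl⟩ := Submodule.mem_span_pair.mp hw
    ext y
    simp [Ψ, hΩ.self_eq_zero, hef, hfe]
  have hO : finrank K O < n := by
    have he0 : e ≠ 0 := by rintro rfl; simp at hef
    have hW0 : W ≠ ⊥ := fun h => he0 ((Submodule.mem_bot K).mp (h ▸ heW))
    have := Submodule.finrank_add_eq_of_isCompl hWO
    have := Submodule.finrank_eq_zero.not.mpr hW0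
    omega
  obtain ⟨k, u, hu, hΨu⟩ := ih _ hO (Ω := Ψ.restrict O) (fun x => hΨ x) rfl
  refine ⟨k + 1, Fin.cons ![Ω e, Ω f] fun j i => π.dualMap (u j i), ?_, ?_⟩
  · have hπ : LinearMap.ker π.dualMap = ⊥ := LinearMap.ker_eq_bot.mpr
      (LinearMap.dualMap_injective_of_surjective (Submodule.projectionOnto_surjective _))
    have hπW {w} (hw : w ∈ W) : π w = 0 := Submodule.projectionOnto_apply_of_mem_right _ hw
    have hu' : LinearIndependent K (Function.uncurry fun j i => π.dualMap (u j i)) :=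
      hu.map' _ hπ
    exact hu'.uncurry_fin_cons (e := e) (f := f) (fun j i => by simp [hπW heW])
      (fun j i => by simp [hπW hfW]) (hΩ.self_eq_zero e) (by simp [hef]) (by simp [hfe])
  · ext x y
    have hΨxy : Ψ x y = (∑ j, wedge (π.dualMap (u j 0)) (π.dualMap (u j 1))) x y := by
      rw [← hΨ.isRefl.apply_projection hWO.symm hΨW]
      exact congr($hΨu (π x) (π y)).trans (by simp [LinearMap.sum_apply])
    simp only [Ψ, LinearMap.sub_apply, sub_eq_iff_eq_add] at hΨxy
    simp [Fin.sum_univ_succ, hΨxy, add_comm]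

theorem nondegenerate_sum_wedge_iff [FiniteDimensional K V] {u : Fin k → Fin 2 → Dual K V}
    (hu : LinearIndependent K (Function.uncurry u)) :
    (∑ j, wedge (u j 0) (u j 1)).Nondegenerate ↔ finrank K V = 2 * k := by
  set Ω := ∑ j, wedge (u j 0) (u j 1)
  have hcard : Fintype.card (Fin k × Fin 2) = 2 * k := by simp [mul_comm]
  have hΩx (x : V) : Ω x = ∑ p : Fin k × Fin 2,
      (![-(u p.1 1 x), u p.1 0 x] p.2) • Function.uncurry u p := by
    simp only [Fintype.sum_prod_type, Fin.sum_univ_two, Matrix.cons_val_zero,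
      Matrix.cons_val_one, Function.uncurry_apply_pair, Ω, LinearMap.sum_apply, wedge_apply,
      sub_eq_neg_add]
    exact Finset.sum_congr rfl fun j _ => by module
  constructor
  · intro hnd
    have hrange : LinearMap.range Ω ≤ Submodule.span K (Set.range (Function.uncurry u)) := by
      rintro _ ⟨x, rfl⟩
      rw [hΩx]
      exact Submodule.sum_mem _ fun p _ => Submodule.smul_mem _ _ (Submodule.subset_span ⟨p, rfl⟩)
    have hle := (Submodule.finrank_mono hrange).trans (finrank_range_le_card _)
    rw [LinearMap.finrank_range_of_inj
      (LinearMap.ker_eq_bot.mp (LinearMap.separatingLeft_iff_ker_eq_bot.mp hnd.1)), hcard] at hle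
    exact hle.antisymm hu.two_mul_le_finrank
  · intro hdim
    have hspan : Submodule.span K (Set.range (Function.uncurry u)) = ⊤ :=
      hu.span_eq_top_of_card_eq_finrank' (by rw [hcard, Subspace.dual_finrank_eq, hdim])
    have halt : Ω.IsAlt := fun x => by simp [Ω, LinearMap.sum_apply, mul_comm]
    refine (halt.isRefl.nondegenerate_iff_separatingLeft).mpr fun x hx => ?_
    have hcoeff := Fintype.linearIndependent_iff.mp hu _ ((hΩx x).symm.trans (LinearMap.ext hx))
    have hux : Submodule.span K (Set.range (Function.uncurry u)) ≤
        LinearMap.ker (Dual.eval K V x) := by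
      refine Submodule.span_le.mpr ?_
      rintro _ ⟨⟨j, i⟩, rfl⟩
      fin_cases i
      · simpa using hcoeff (j, 1)
      · simpa using hcoeff (j, 0)
    exact (forall_dual_apply_eq_zero_iff K x).mp fun φ => hux (hspan ▸ Submodule.mem_top : φ ∈ _)

end Wedge

section ToExterior

variable {K V : Type*} [Field K] [AddCommGroup V] [Module K V] [FiniteDimensional K V]

noncomputable def bilinToExteriorₗ : LinearMap.BilinForm K V →ₗ[K] ExteriorAlgebra K (Dual K V) :=
  TensorProduct.lift
    ((LinearMap.mul K (ExteriorAlgebra K (Dual K V))).compl₁₂ (ι K) (ι K)) ∘ₗ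
    (dualTensorHomEquiv K V (Dual K V)).symm.toLinearMap

theorem coe_bilinToExteriorₗ : ⇑(bilinToExteriorₗ (K := K) (V := V)) = bilinToExterior := rfl

theorem bilinToExterior_smulRight (f g : Dual K V) :
    bilinToExterior (f.smulRight g) = ι K f * ι K g := by
  have : f.smulRight g = dualTensorHomEquiv K V (Dual K V) (f ⊗ₜ g) := by
    ext x; simp [dualTensorHom_apply]
  rw [bilinToExterior, this, (dualTensorHomEquiv K V (Dual K V)).symm_apply_apply,
    TensorProduct.lift.tmul, LinearMap.compl₁₂_apply, LinearMap.mul_apply']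

theorem bilinToExterior_wedge (f g : Dual K V) :
    bilinToExterior (wedge f g) = 2 • (ι K f * ι K g) := by
  rw [wedge, ← coe_bilinToExteriorₗ, map_sub bilinToExteriorₗ (f.smulRight g) (g.smulRight f),
    coe_bilinToExteriorₗ, bilinToExterior_smulRight, bilinToExterior_smulRight, ι_mul_ι_comm g f,
    sub_neg_eq_add, two_smul]

variable {k : ℕ} (u : Fin k → Fin 2 → Dual K V)

theorem bilinToExterior_sum_wedge :
    bilinToExterior (∑ j, wedge (u j 0) (u j 1)) = 2 • ∑ j, ι K (u j 0) * ι K (u j 1) := by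
  simp only [← coe_bilinToExteriorₗ, map_sum, Finset.smul_sum]
  simp only [coe_bilinToExteriorₗ, bilinToExterior_wedge]

theorem bilinToExterior_sum_wedge_pow_eq_zero {n : ℕ} (hkn : k < n) :
    bilinToExterior (∑ j, wedge (u j 0) (u j 1)) ^ n = 0 := by
  rw [bilinToExterior_sum_wedge, smul_pow]
  refine smul_eq_zero_of_right _ (pow_eq_zero_of_le hkn ?_)
  exact sum_pow_succ_eq_zero_of_mul_self_eq_zero (fun _ _ => commute_ι_mul_ι ..)
    (fun _ => ι_mul_ι_mul_self ..)

theorem bilinToExterior_sum_wedge_pow_ne_zero [CharZero K]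
    (hu : LinearIndependent K (Function.uncurry u)) :
    bilinToExterior (∑ j, wedge (u j 0) (u j 1)) ^ k ≠ 0 := by
  rw [bilinToExterior_sum_wedge, smul_pow, sum_pow_eq_factorial_nsmul_prod_of_mul_self_eq_zero
    (fun _ _ => commute_ι_mul_ι ..) (fun _ => ι_mul_ι_mul_self ..), smul_smul,
    ← Nat.cast_smul_eq_nsmul K]
  exact smul_ne_zero (Nat.cast_ne_zero.mpr (by positivity)) (prod_ofFn_ι_mul_ι_ne_zero hu)

end ToExterior

/-- Let `V` be a `2m`-dimensional vector space over a field `K` of characteristic 0 with an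
alternating bilinear form `Ω`, viewed as an element of `Λ²(V^*)` inside the exterior algebra
of `V^*`. Then `Ω` is nondegenerate if and only if its `m`-th wedge power `Ω^{∧m}` is
nonzero. -/
theorem stmt_14 {K V : Type*} [Field K] [CharZero K] [AddCommGroup V] [Module K V]
    [FiniteDimensional K V] (m : ℕ) (hdim : Module.finrank K V = 2 * m)
    (Ω : LinearMap.BilinForm K V) (halt : Ω.IsAlt) :
    Ω.Nondegenerate ↔ (bilinToExterior Ω) ^ m ≠ 0 := by
  obtain ⟨k, u, hu, rfl⟩ := halt.exists_eq_sum_wedge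
  have hkm : k ≤ m := by have := hu.two_mul_le_finrank; omega
  rw [nondegenerate_sum_wedge_iff hu, hdim]
  rcases hkm.lt_or_eq with hlt | rfl
  · simpa [bilinToExterior_sum_wedge_pow_eq_zero u hlt] using hlt.ne'
  · simpa using bilinToExterior_sum_wedge_pow_ne_zero u hu
end
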